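/- arXiv:1509.04704 — 2 statements merged into one kernel-verified Lean document; each statement's English description precedes it below -/
import Mathlib

section
/- Let {a_h} be a real sequence satisfying the recursion a_h = c_h(c·a_{h−1} + C + d_h), where |1 − c_h| = O(ρ^h), |d_h| = O(ρ^h), C is a constant, and 0 ≤ c < ρ < 1. Then |a_h − C/(1−c)| = O(ρ^h). -/
/-!
With `L = C / (1 - c')` the error `e h = a h - L` satisfies the linear recursion
`e h = c h * c' * e (h - 1) + r h` with `r h = c h * d h - L * (1 - c h) = O(ρ^h)`.
Since `c h → 1`, the coefficient is eventually at most some `κ < ρ`, so `y h = |e h| / ρ^h`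
eventually satisfies `y (h + 1) ≤ (κ / ρ) * y h + B` with `κ / ρ < 1` and stays bounded.
-/

open Filter Asymptotics Topology

lemma le_max_of_le_mul_add {y : ℕ → ℝ} {θ B : ℝ} (hθ0 : 0 ≤ θ) (hθ1 : θ < 1)
    (hy : ∀ n, y (n + 1) ≤ θ * y n + B) (n : ℕ) : y n ≤ max (y 0) (B / (1 - θ)) := by
  set m := max (y 0) (B / (1 - θ))
  have hBm : B ≤ (1 - θ) * m := (div_le_iff₀' (by linarith)).1 (le_max_right _ _)
  induction n with
  | zero => exact le_max_left _ _
  | succ n ih =>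
    calc y (n + 1) ≤ θ * y n + B := hy n
      _ ≤ θ * m + B := by gcongr
      _ ≤ m := by linarith

lemma isBigO_pow_of_norm_le_mul_add {E : Type*} [SeminormedAddCommGroup E] {e : ℕ → E}
    {κ ρ B : ℝ} (hκ : 0 ≤ κ) (hκρ : κ < ρ)
    (he : ∀ᶠ n in atTop, ‖e (n + 1)‖ ≤ κ * ‖e n‖ + B * ρ ^ (n + 1)) :
    e =O[atTop] (ρ ^ ·) := by
  have hρ : 0 < ρ := hκ.trans_lt hκρ
  obtain ⟨N, hN⟩ := eventually_atTop.1 he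
  set y : ℕ → ℝ := fun k => ‖e (N + k)‖ / ρ ^ (N + k)
  have hy : ∀ k, y (k + 1) ≤ κ / ρ * y k + B := by
    intro k
    calc y (k + 1) = ‖e (N + k + 1)‖ / ρ ^ (N + k + 1) := rfl
      _ ≤ (κ * ‖e (N + k)‖ + B * ρ ^ (N + k + 1)) / ρ ^ (N + k + 1) := by
          gcongr; exact hN _ (by omega)
      _ = κ / ρ * y k + B := by simp only [y]; field_simp; ring
  refine IsBigO.of_bound (max (y 0) (B / (1 - κ / ρ))) ?_
  filter_upwards [eventually_ge_atTop N] with n hn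
  obtain ⟨k, rfl⟩ := Nat.exists_eq_add_of_le hn
  have := le_max_of_le_mul_add (div_nonneg hκ hρ.le) ((div_lt_one hρ).2 hκρ) hy k
  rwa [div_le_iff₀ (pow_pos hρ _), ← abs_of_pos (pow_pos hρ (N + k))] at this

lemma isBigO_pow_of_eq_smul_add {𝕜 E : Type*} [NormedField 𝕜] [SeminormedAddCommGroup E]
    [NormedSpace 𝕜 E] {e r : ℕ → E} {k : ℕ → 𝕜} {κ : 𝕜} {ρ : ℝ}
    (hk : Tendsto k atTop (𝓝 κ)) (hκρ : ‖κ‖ < ρ) (hr : r =O[atTop] (ρ ^ ·))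
    (he : ∀ n, e (n + 1) = k (n + 1) • e n + r (n + 1)) :
    e =O[atTop] (ρ ^ ·) := by
  obtain ⟨κ', hκκ', hκ'ρ⟩ := exists_between hκρ
  obtain ⟨B, hB⟩ := hr.bound
  have hρ : 0 < ρ := (norm_nonneg κ).trans_lt hκρ
  have hk' : ∀ᶠ n in atTop, ‖k n‖ ≤ κ' := hk.norm.eventually_le_const hκκ'
  refine isBigO_pow_of_norm_le_mul_add (B := B) ((norm_nonneg κ).trans hκκ'.le) hκ'ρ ?_
  filter_upwards [(tendsto_add_atTop_nat 1).eventually hk',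
    (tendsto_add_atTop_nat 1).eventually hB] with n hkn hrn
  calc ‖e (n + 1)‖ ≤ ‖k (n + 1)‖ * ‖e n‖ + ‖r (n + 1)‖ := by
        rw [he, ← norm_smul]; exact norm_add_le _ _
    _ ≤ κ' * ‖e n‖ + B * ρ ^ (n + 1) := by
        rw [norm_pow, Real.norm_of_nonneg hρ.le] at hrn
        gcongr

lemma isBigO_pow_iff_forall_abs_le {f : ℕ → ℝ} {ρ : ℝ} (hρ : 0 < ρ) :
    f =O[atTop] (ρ ^ ·) ↔ ∃ M, ∀ n, |f n| ≤ M * ρ ^ n := by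
  rw [isBigO_nat_atTop_iff fun n h => absurd h (pow_ne_zero n hρ.ne')]
  simp only [Real.norm_eq_abs, abs_pow, abs_of_pos hρ]

/-- If `a h = c h * (c' * a (h-1) + C + d h)` with `|1 - c h| = O(ρ^h)`,
`|d h| = O(ρ^h)`, and `0 ≤ c' < ρ < 1`, then `|a h - C/(1-c')| = O(ρ^h)`. -/
theorem stmt_4 (a c d : ℕ → ℝ) (c' C ρ : ℝ)
    (hc' : 0 ≤ c') (hcρ : c' < ρ) (hρ : ρ < 1)
    (hrec : ∀ h : ℕ, 1 ≤ h → a h = c h * (c' * a (h - 1) + C + d h))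
    (hc : ∃ M : ℝ, ∀ h : ℕ, |1 - c h| ≤ M * ρ ^ h)
    (hd : ∃ M : ℝ, ∀ h : ℕ, |d h| ≤ M * ρ ^ h) :
    ∃ M : ℝ, ∀ h : ℕ, |a h - C / (1 - c')| ≤ M * ρ ^ h := by
  have hρ0 : 0 < ρ := hc'.trans_lt hcρ
  have hc'1 : 1 - c' ≠ 0 := sub_ne_zero.2 (hcρ.trans hρ).ne'
  set L := C / (1 - c')
  have hL : c' * L + C = L := by simp only [L]; field_simp; ring
  have h1c := (isBigO_pow_iff_forall_abs_le hρ0).2 hc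
  have hd' := (isBigO_pow_iff_forall_abs_le hρ0).2 hd
  have hlim : Tendsto c atTop (𝓝 1) := by
    simpa using
      (h1c.trans_tendsto (tendsto_pow_atTop_nhds_zero_of_lt_one hρ0.le hρ)).const_sub 1
  have hr : (fun h => c h * d h - L * (1 - c h)) =O[atTop] (ρ ^ ·) := by
    have hcd : (fun h => c h * d h) =O[atTop] (ρ ^ ·) := by
      simpa using (hlim.isBigO_one ℝ).mul hd'
    exact hcd.sub (h1c.const_mul_left L)
  refine (isBigO_pow_iff_forall_abs_le hρ0).1 <|
    isBigO_pow_of_eq_smul_add (hlim.mul_const c') ?_ hr fun n => ?_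
  · simpa [abs_of_nonneg hc'] using hcρ
  · rw [hrec (n + 1) n.succ_pos, Nat.add_sub_cancel, smul_eq_mul]
    linear_combination c (n + 1) * hL
end

section
/- The even moments γ_{2ℓ} of ξ ~ N(0, γ_2) satisfy, for every k ≥ 1, the self-consistency relation γ_k = 2^{-(k-2)/2} γ_k + 2^{-k/2} Σ_{m=1}^{k-1} C(k,m) γ_m γ_{k-m}, where γ_m = E(ξ^m) (so odd moments vanish). Equivalently, (1 − 2^{-(k-2)/2}) γ_k = 2^{-k/2} Σ_{m=1}^{k-1} C(k,m) γ_m γ_{k-m}. -/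
/-!
For odd `k` every term of the convolution contains an odd moment, so both sides vanish. For
`k = 2l` only the even indices `m = 2j` contribute, and `(2n)! = 2ⁿ n! (2n-1)‼` turns
`C(2l, 2j) (2j-1)‼ (2l-2j-1)‼` into `C(l, j) (2l-1)‼`. Summing over `0 < j < l` gives the
convolution `(2ˡ - 2) γ_{2l}`, and indeed `1 - 2^{1-l} = 2^{-l} (2ˡ - 2)`.
-/

open Finset Nat

theorem Nat.factorial_two_mul_eq (n : ℕ) : (2 * n)! = 2 ^ n * n ! * (2 * n - 1)‼ := by
  cases n with
  | zero => rfl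
  | succ n =>
    rw [show 2 * (n + 1) - 1 = 2 * n + 1 by omega, show 2 * (n + 1) = 2 * n + 1 + 1 by ring,
      factorial_eq_mul_doubleFactorial, show 2 * n + 1 + 1 = 2 * (n + 1) by ring,
      doubleFactorial_two_mul]

theorem Nat.choose_two_mul_mul_doubleFactorial {l j : ℕ} (hj : j ≤ l) :
    (2 * l).choose (2 * j) * (2 * j - 1)‼ * (2 * (l - j) - 1)‼
      = l.choose j * (2 * l - 1)‼ := by
  apply Nat.eq_of_mul_eq_mul_right (show 0 < 2 ^ l * (j ! * (l - j)!) by positivity)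
  have h2l := choose_mul_factorial_mul_factorial (Nat.mul_le_mul_left 2 hj)
  have hl := choose_mul_factorial_mul_factorial hj
  rw [← Nat.mul_sub, factorial_two_mul_eq, factorial_two_mul_eq, factorial_two_mul_eq] at h2l
  have hpow : 2 ^ l = 2 ^ j * 2 ^ (l - j) := by rw [← pow_add, Nat.add_sub_cancel' hj]
  calc (2 * l).choose (2 * j) * (2 * j - 1)‼ * (2 * (l - j) - 1)‼ * (2 ^ l * (j ! * (l - j)!))
      = (2 * l).choose (2 * j) * (2 ^ j * j ! * (2 * j - 1)‼)
          * (2 ^ (l - j) * (l - j)! * (2 * (l - j) - 1)‼) := by rw [hpow]; ring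
    _ = 2 ^ l * l ! * (2 * l - 1)‼ := h2l
    _ = 2 ^ l * (l.choose j * j ! * (l - j)!) * (2 * l - 1)‼ := by rw [hl]
    _ = l.choose j * (2 * l - 1)‼ * (2 ^ l * (j ! * (l - j)!)) := by ring

theorem Nat.sum_Ioo_choose_add_two {n : ℕ} (hn : 1 ≤ n) :
    ∑ j ∈ Ioo 0 n, n.choose j + 2 = 2 ^ n := by
  have hrange : range (n + 1) = insert 0 (insert n (Ioo 0 n)) := by
    ext x; simp; omega
  rw [← sum_range_choose, hrange, sum_insert (by simp; omega), sum_insert (by simp),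
    choose_zero_right, choose_self]
  ring

theorem Finset.sum_Ioo_two_mul_of_odd_eq_zero {M : Type*} [AddCommMonoid M] (f : ℕ → M)
    (hf : ∀ j, f (2 * j + 1) = 0) (l : ℕ) :
    ∑ m ∈ Ioo 0 (2 * l), f m = ∑ j ∈ Ioo 0 l, f (2 * j) := by
  rw [← sum_image fun x _ y _ (h : 2 * x = 2 * y) => by omega]
  refine (sum_subset (fun m hm => ?_) fun m hm hm' => ?_).symm
  · obtain ⟨j, hj, rfl⟩ := mem_image.1 hm
    simp only [mem_Ioo] at hj ⊢
    omega
  · obtain ⟨j, rfl | rfl⟩ := Nat.even_or_odd' m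
    · exact absurd (mem_image.2 ⟨j, by simp only [mem_Ioo] at hm ⊢; omega, rfl⟩) hm'
    · exact hf j

theorem Real.two_rpow_neg_sub_two_div_two (x : ℝ) :
    (2 : ℝ) ^ (-((x - 2) / 2)) = 2 * 2 ^ (-(x / 2)) := by
  rw [show -((x - 2) / 2) = 1 + -(x / 2) by ring, Real.rpow_add two_pos, Real.rpow_one]

theorem Real.two_rpow_neg_two_mul_div_two (l : ℕ) :
    (2 : ℝ) ^ (-(((2 * l : ℕ) : ℝ) / 2)) = (2 ^ l)⁻¹ := by
  rw [Real.rpow_neg zero_le_two, Nat.cast_mul, Nat.cast_two,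
    mul_div_cancel_left₀ _ two_ne_zero, Real.rpow_natCast]

section GaussianMoments

variable {γ₂ : ℝ} {g : ℕ → ℝ}

theorem moment_convolution_odd (hgodd : ∀ ℓ : ℕ, g (2 * ℓ + 1) = 0) (l : ℕ) :
    ∑ m ∈ Ioo 0 (2 * l + 1), ((2 * l + 1).choose m : ℝ) * g m * g (2 * l + 1 - m) = 0 := by
  refine sum_eq_zero fun m hm => ?_
  obtain ⟨j, rfl | rfl⟩ := Nat.even_or_odd' m
  · rw [show 2 * l + 1 - 2 * j = 2 * (l - j) + 1 by simp only [mem_Ioo] at hm; omega, hgodd,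
      mul_zero]
  · rw [hgodd, mul_zero, zero_mul]

theorem moment_convolution_even
    (hgeven : ∀ ℓ : ℕ, g (2 * ℓ) = (Nat.doubleFactorial (2 * ℓ - 1) : ℝ) * γ₂ ^ ℓ)
    (hgodd : ∀ ℓ : ℕ, g (2 * ℓ + 1) = 0) {l : ℕ} (hl : 1 ≤ l) :
    ∑ m ∈ Ioo 0 (2 * l), ((2 * l).choose m : ℝ) * g m * g (2 * l - m)
      = (2 ^ l - 2) * g (2 * l) := by
  rw [sum_Ioo_two_mul_of_odd_eq_zero _ fun j => by rw [hgodd, mul_zero, zero_mul]]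
  have hterm : ∀ j ∈ Ioo 0 l,
      ((2 * l).choose (2 * j) : ℝ) * g (2 * j) * g (2 * l - 2 * j) = l.choose j * g (2 * l) := by
    intro j hj
    have hjl : j ≤ l := (mem_Ioo.1 hj).2.le
    rw [← Nat.mul_sub, hgeven, hgeven, hgeven]
    calc _ = (((2 * l).choose (2 * j) * (2 * j - 1)‼ * (2 * (l - j) - 1)‼ : ℕ) : ℝ)
            * (γ₂ ^ j * γ₂ ^ (l - j)) := by push_cast; ring
      _ = l.choose j * ((2 * l - 1)‼ * γ₂ ^ l) := by
        rw [choose_two_mul_mul_doubleFactorial hjl, ← pow_add, Nat.add_sub_cancel' hjl]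
        push_cast; ring
  have hchoose : ∑ j ∈ Ioo 0 l, (l.choose j : ℝ) = 2 ^ l - 2 := by
    rw [eq_sub_iff_add_eq]; exact_mod_cast sum_Ioo_choose_add_two hl
  rw [sum_congr rfl hterm, ← sum_mul, hchoose]

end GaussianMoments

theorem stmt_18_general (γ₂ : ℝ) (g : ℕ → ℝ)
    (hgeven : ∀ ℓ : ℕ, g (2 * ℓ) = (Nat.doubleFactorial (2 * ℓ - 1) : ℝ) * γ₂ ^ ℓ)
    (hgodd : ∀ ℓ : ℕ, g (2 * ℓ + 1) = 0)
    (k : ℕ) (hk : 1 ≤ k) :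
    g k = (2 : ℝ) ^ (-(((k : ℝ) - 2) / 2)) * g k
        + (2 : ℝ) ^ (-((k : ℝ) / 2)) * ∑ m ∈ Finset.Ioo 0 k, (Nat.choose k m : ℝ) * g m * g (k - m)
    ∧ (1 - (2 : ℝ) ^ (-(((k : ℝ) - 2) / 2))) * g k
        = (2 : ℝ) ^ (-((k : ℝ) / 2)) * ∑ m ∈ Finset.Ioo 0 k, (Nat.choose k m : ℝ) * g m * g (k - m) := by
  have hrel : (1 - (2 : ℝ) ^ (-(((k : ℝ) - 2) / 2))) * g k
      = (2 : ℝ) ^ (-((k : ℝ) / 2)) * ∑ m ∈ Ioo 0 k, (k.choose m : ℝ) * g m * g (k - m) := by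
    rw [Real.two_rpow_neg_sub_two_div_two]
    obtain ⟨l, rfl | rfl⟩ := Nat.even_or_odd' k
    · rw [moment_convolution_even hgeven hgodd (by omega), Real.two_rpow_neg_two_mul_div_two]
      field_simp
    · rw [moment_convolution_odd hgodd, hgodd]
      ring
  exact ⟨by linarith, hrel⟩

/-- The moments γ_m = E(ξ^m) of ξ ~ N(0, γ₂) (γ₂ > 0), i.e.
γ_{2ℓ} = (2ℓ−1)!! γ₂^ℓ and γ_{2ℓ+1} = 0, satisfy for every k ≥ 1:
γ_k = 2^{-(k-2)/2} γ_k + 2^{-k/2} Σ_{m=1}^{k-1} C(k,m) γ_m γ_{k-m}, equivalently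
(1 − 2^{-(k-2)/2}) γ_k = 2^{-k/2} Σ_{m=1}^{k-1} C(k,m) γ_m γ_{k-m}. -/
theorem stmt_18 (γ₂ : ℝ) (hγ₂ : 0 < γ₂) (g : ℕ → ℝ)
    (hgeven : ∀ ℓ : ℕ, g (2 * ℓ) = (Nat.doubleFactorial (2 * ℓ - 1) : ℝ) * γ₂ ^ ℓ)
    (hgodd : ∀ ℓ : ℕ, g (2 * ℓ + 1) = 0)
    (k : ℕ) (hk : 1 ≤ k) :
    g k = (2 : ℝ) ^ (-(((k : ℝ) - 2) / 2)) * g k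
        + (2 : ℝ) ^ (-((k : ℝ) / 2)) * ∑ m ∈ Finset.Ioo 0 k, (Nat.choose k m : ℝ) * g m * g (k - m)
    ∧ (1 - (2 : ℝ) ^ (-(((k : ℝ) - 2) / 2))) * g k
        = (2 : ℝ) ^ (-((k : ℝ) / 2)) * ∑ m ∈ Finset.Ioo 0 k, (Nat.choose k m : ℝ) * g m * g (k - m) :=
  stmt_18_general γ₂ g hgeven hgodd k hk
end
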